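/- arXiv:2009.12910 — 4 statements merged into one kernel-verified Lean document; each statement's English description precedes it below -/
import Mathlib

section
/- The function p ↦ Σ_{n ∈ A} k! Π_{j=1}^m p_j^{n_j}/n_j!, summing multinomial probabilities over any fixed subset A of outcomes with Σ n_j = k, is Lipschitz continuous on the simplex with respect to the sup-norm, with Lipschitz constant at most k·m. -/
open Finset

lemma full_sum (m t : ℕ) (x : Fin m → ℝ) :
    ∑ n ∈ Finset.Nat.antidiagonalTuple m t,
      (t.factorial : ℝ) * ∏ j, x j ^ n j / ((n j).factorial : ℝ) = (∑ j, x j) ^ t := by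
  rw [← Finset.piAntidiag_univ_fin_eq_antidiagonalTuple t m,
    Finset.sum_pow_eq_sum_piAntidiag]
  refine Finset.sum_congr rfl fun n hn => ?_
  rw [Finset.mem_piAntidiag] at hn
  have hs : ∑ j, n j = t := hn.1
  have key : (∏ j, ((n j).factorial : ℝ)) * (Nat.multinomial Finset.univ n : ℝ)
      = (t.factorial : ℝ) := by
    rw [← hs, ← Nat.multinomial_spec]; push_cast; ring
  have hD : ∀ j : Fin m, ((n j).factorial : ℝ) ≠ 0 := fun j => by positivity
  rw [Finset.prod_div_distrib]
  rw [← key]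
  field_simp

lemma deriv_sum_eq (m k : ℕ) (hk : 1 ≤ k) (x : Fin m → ℝ) (i : Fin m) :
    ∑ n ∈ Finset.Nat.antidiagonalTuple m k,
      (k.factorial : ℝ) * ((∏ j ∈ Finset.univ.erase i, x j ^ n j / ((n j).factorial : ℝ)) *
        ((n i : ℝ) * x i ^ (n i - 1) / ((n i).factorial : ℝ)))
      = (k : ℝ) * (∑ j, x j) ^ (k - 1) := by
  classical
  rw [← full_sum m (k-1) x, Finset.mul_sum]
  have hfilter := Finset.sum_filter_of_ne (s := Finset.Nat.antidiagonalTuple m k)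
    (p := fun n => n i ≠ 0)
    (f := fun n => (k.factorial : ℝ) * ((∏ j ∈ Finset.univ.erase i, x j ^ n j / ((n j).factorial : ℝ)) *
        ((n i : ℝ) * x i ^ (n i - 1) / ((n i).factorial : ℝ))))
    (fun n _ h h0 => by apply h; simp [h0])
  rw [← hfilter]
  refine Finset.sum_nbij' (fun n => Function.update n i (n i - 1))
    (fun n => Function.update n i (n i + 1)) ?_ ?_ ?_ ?_ ?_
  · intro n hn
    simp only [Finset.mem_filter, Finset.Nat.mem_antidiagonalTuple] at hn ⊢
    rw [Finset.sum_update_of_mem (Finset.mem_univ i), ← Finset.erase_eq]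
    have h2 := Finset.add_sum_erase Finset.univ n (Finset.mem_univ i)
    omega
  · intro n hn
    simp only [Finset.mem_filter, Finset.Nat.mem_antidiagonalTuple] at hn ⊢
    constructor
    · rw [Finset.sum_update_of_mem (Finset.mem_univ i), ← Finset.erase_eq]
      have h2 := Finset.add_sum_erase Finset.univ n (Finset.mem_univ i)
      omega
    · simp
  · intro n hn
    simp only [Finset.mem_filter] at hn
    funext j
    rcases eq_or_ne j i with rfl | hj
    · simp [Function.update_self]
      omega
    · simp [Function.update_of_ne hj]
  · intro n hn
    funext j
    rcases eq_or_ne j i with rfl | hj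
    · simp [Function.update_self]
    · simp [Function.update_of_ne hj]
  · intro n hn
    simp only [Finset.mem_filter, Finset.Nat.mem_antidiagonalTuple] at hn
    obtain ⟨hsum, hni⟩ := hn
    have h1 : ∏ j, x j ^ (Function.update n i (n i - 1) j)
        / ((Function.update n i (n i - 1) j).factorial : ℝ)
        = (x i ^ (n i - 1) / ((n i - 1).factorial : ℝ)) *
          ∏ j ∈ Finset.univ.erase i, x j ^ n j / ((n j).factorial : ℝ) := by
      rw [← Finset.mul_prod_erase _ _ (Finset.mem_univ i)]
      congr 1
      · simp
      · exact Finset.prod_congr rfl fun j hj => by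
          rw [Function.update_of_ne (Finset.ne_of_mem_erase hj)]
    rw [h1]
    have h2 : (n i : ℝ) * ((n i - 1).factorial : ℝ) = ((n i).factorial : ℝ) := by
      exact_mod_cast Nat.mul_factorial_pred hni
    have h3 : (k : ℝ) * ((k - 1).factorial : ℝ) = (k.factorial : ℝ) := by
      exact_mod_cast Nat.mul_factorial_pred (by omega : k ≠ 0)
    have hne1 : ((n i - 1).factorial : ℝ) ≠ 0 := by positivity
    have hne2 : ((n i).factorial : ℝ) ≠ 0 := by positivity
    have e1 : (n i : ℝ) / (((n i).factorial : ℕ) : ℝ) = 1 / (((n i - 1).factorial : ℕ) : ℝ) := by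
      field_simp
      linear_combination h2
    set P := ∏ j ∈ Finset.univ.erase i, x j ^ n j / ((n j).factorial : ℝ) with hP
    set a := x i ^ (n i - 1) with ha
    linear_combination (k.factorial : ℝ) * P * a * e1 -
      (P * a / (((n i - 1).factorial : ℕ) : ℝ)) * h3

theorem stmt4 (m k : ℕ) (hk : 1 ≤ k)
    (A : Finset (Fin m → ℕ)) (hA : A ⊆ Finset.Nat.antidiagonalTuple m k)
    (p q : Fin m → ℝ)
    (hp0 : ∀ j, 0 ≤ p j) (hp1 : ∑ j, p j = 1)
    (hq0 : ∀ j, 0 ≤ q j) (hq1 : ∑ j, q j = 1) :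
    |(∑ n ∈ A, (k.factorial : ℝ) * ∏ j, (p j) ^ (n j) / ((n j).factorial : ℝ))
      - ∑ n ∈ A, (k.factorial : ℝ) * ∏ j, (q j) ^ (n j) / ((n j).factorial : ℝ)|
      ≤ (k * m : ℝ) * ‖p - q‖ := by
  classical
  set d : Fin m → ℝ := fun j => q j - p j with hd
  set F : ℝ → ℝ := fun t => ∑ n ∈ A, (k.factorial : ℝ) *
      ∏ j, (p j + t * d j) ^ n j / ((n j).factorial : ℝ) with hF
  set F' : ℝ → ℝ := fun t => ∑ n ∈ A, (k.factorial : ℝ) *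
      ∑ i, (∏ j ∈ Finset.univ.erase i, ((p j + t * d j) ^ n j / ((n j).factorial : ℝ))) *
        ((n i : ℝ) * (p i + t * d i) ^ (n i - 1) * d i / ((n i).factorial : ℝ)) with hF'
  have hderiv : ∀ t : ℝ, HasDerivAt F (F' t) t := by
    intro t
    apply HasDerivAt.fun_sum
    intro n _
    apply HasDerivAt.const_mul
    have hfac : ∀ j : Fin m, j ∈ Finset.univ → HasDerivAt
        (fun s : ℝ => (p j + s * d j) ^ n j / ((n j).factorial : ℝ))
        ((n j : ℝ) * (p j + t * d j) ^ (n j - 1) * d j / ((n j).factorial : ℝ)) t := by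
      intro j _
      have h1 : HasDerivAt (fun s : ℝ => p j + s * d j) (d j) t := by
        simpa using ((hasDerivAt_id t).mul_const (d j)).const_add (p j)
      exact (h1.pow (n j)).div_const _
    have := HasDerivAt.fun_finsetProd hfac
    simpa [smul_eq_mul] using this
  have key : ∀ t ∈ Set.Icc (0:ℝ) 1, ‖F' t‖ ≤ (k * m : ℝ) * ‖p - q‖ := by
    intro t ht
    set y : Fin m → ℝ := fun j => p j + t * d j with hy
    have hy0 : ∀ j, 0 ≤ y j := by
      intro j
      have hyj : y j = (1 - t) * p j + t * q j := by simp only [hy, hd]; ring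
      rw [hyj]
      have h1 : 0 ≤ 1 - t := by linarith [ht.2]
      have h2 : (0:ℝ) ≤ t := ht.1
      have := hp0 j; have := hq0 j
      positivity
    have hy1 : (∑ j, y j) = 1 := by
      simp only [hy, hd]
      rw [Finset.sum_add_distrib, ← Finset.mul_sum, Finset.sum_sub_distrib, hp1, hq1]
      ring
    set T : Fin m → ℝ := fun i => ∑ n ∈ A, (k.factorial : ℝ) *
        ((∏ j ∈ Finset.univ.erase i, y j ^ n j / ((n j).factorial : ℝ)) *
          ((n i : ℝ) * y i ^ (n i - 1) / ((n i).factorial : ℝ))) with hT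
    have htermnn : ∀ (i : Fin m) (n : Fin m → ℕ), 0 ≤ (k.factorial : ℝ) *
        ((∏ j ∈ Finset.univ.erase i, y j ^ n j / ((n j).factorial : ℝ)) *
          ((n i : ℝ) * y i ^ (n i - 1) / ((n i).factorial : ℝ))) := by
      intro i n
      apply mul_nonneg (by positivity)
      apply mul_nonneg
      · apply Finset.prod_nonneg
        intro j _
        have := hy0 j
        positivity
      · have := hy0 i
        positivity
    have hTnn : ∀ i, 0 ≤ T i := fun i =>
      Finset.sum_nonneg fun n _ => htermnn i n
    have hTle : ∀ i, T i ≤ (k : ℝ) := by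
      intro i
      have h1 : T i ≤ ∑ n ∈ Finset.Nat.antidiagonalTuple m k, (k.factorial : ℝ) *
          ((∏ j ∈ Finset.univ.erase i, y j ^ n j / ((n j).factorial : ℝ)) *
            ((n i : ℝ) * y i ^ (n i - 1) / ((n i).factorial : ℝ))) :=
        Finset.sum_le_sum_of_subset_of_nonneg hA fun n _ _ => htermnn i n
      rw [deriv_sum_eq m k hk y i, hy1] at h1
      simpa using h1
    have hrearr : F' t = ∑ i, d i * T i := by
      rw [hF', hT]
      simp only [Finset.mul_sum]
      rw [Finset.sum_comm]
      refine Finset.sum_congr rfl fun i _ => ?_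
      refine Finset.sum_congr rfl fun n _ => ?_
      simp only [hy]
      ring
    rw [hrearr]
    have hdle : ∀ i, |d i| ≤ ‖p - q‖ := by
      intro i
      have := norm_le_pi_norm (p - q) i
      rw [Pi.sub_apply, Real.norm_eq_abs] at this
      calc |d i| = |p i - q i| := by rw [hd]; rw [abs_sub_comm]
        _ ≤ ‖p - q‖ := this
    calc ‖∑ i, d i * T i‖ ≤ ∑ i, ‖d i * T i‖ := norm_sum_le _ _
      _ ≤ ∑ _i : Fin m, ‖p - q‖ * (k : ℝ) := by
          refine Finset.sum_le_sum fun i _ => ?_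
          rw [norm_mul, Real.norm_eq_abs, Real.norm_eq_abs, abs_of_nonneg (hTnn i)]
          exact mul_le_mul (hdle i) (hTle i) (hTnn i) (norm_nonneg _)
      _ = (k * m : ℝ) * ‖p - q‖ := by
          rw [Finset.sum_const, Finset.card_univ, Fintype.card_fin, nsmul_eq_mul]
          ring
  have hmvt := Convex.norm_image_sub_le_of_norm_hasDerivWithin_le
    (f := F) (f' := F') (s := Set.Icc (0:ℝ) 1) (C := (k * m : ℝ) * ‖p - q‖)
    (fun x hx => (hderiv x).hasDerivWithinAt) key (convex_Icc 0 1)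
    (Set.left_mem_Icc.2 zero_le_one) (Set.right_mem_Icc.2 zero_le_one)
  have hF0 : F 0 = ∑ n ∈ A, (k.factorial : ℝ) * ∏ j, (p j) ^ (n j) / ((n j).factorial : ℝ) := by
    simp [hF]
  have hF1 : F 1 = ∑ n ∈ A, (k.factorial : ℝ) * ∏ j, (q j) ^ (n j) / ((n j).factorial : ℝ) := by
    rw [hF]
    refine Finset.sum_congr rfl fun n _ => ?_
    congr 1
    refine Finset.prod_congr rfl fun j _ => ?_
    simp [hd]
  rw [hF0, hF1] at hmvt
  rw [Real.norm_eq_abs] at hmvt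
  rw [abs_sub_comm]
  calc |(∑ n ∈ A, (k.factorial : ℝ) * ∏ j, (q j) ^ (n j) / ((n j).factorial : ℝ))
      - ∑ n ∈ A, (k.factorial : ℝ) * ∏ j, (p j) ^ (n j) / ((n j).factorial : ℝ)|
      ≤ (k * m : ℝ) * ‖p - q‖ * ‖(1:ℝ) - 0‖ := hmvt
    _ = (k * m : ℝ) * ‖p - q‖ := by simp
end

section
/- Under the greedy construction where at each step t one increments the coordinate a maximizing p_a - p_a^{(t-1)} by (1-β)β^{t-1}, if (1-β)m ≤ 1 then for all t: (i) p_j^{(t)} ≤ p_j for every j, and (ii) Σ_j p_j^{(t)} = 1 - β^t. -/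
theorem stmt6 (m : ℕ) (β : ℝ) (hβ : β ∈ Set.Ioo (0:ℝ) 1) (hβm : (1 - β) * m ≤ 1)
    (p : Fin m → ℝ) (hp0 : ∀ j, 0 ≤ p j) (hp1 : ∑ j, p j = 1)
    (q : ℕ → Fin m → ℝ) (hq0 : ∀ j, q 0 j = 0)
    (hstep : ∀ t, ∃ a : Fin m, (∀ j, p j - q t j ≤ p a - q t a) ∧
      ∀ j, q (t + 1) j = q t j + (1 - β) * β ^ t * (if j = a then 1 else 0)) :
    ∀ t, (∀ j, q t j ≤ p j) ∧ (∑ j, q t j = 1 - β ^ t) := by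
  obtain ⟨hβ0, hβ1⟩ := hβ
  have hm : 0 < m := by
    rcases Nat.eq_zero_or_pos m with h | h
    · subst h; simp at hp1
    · exact h
  intro t
  induction t with
  | zero => simp [hq0, hp0]
  | succ t ih =>
    obtain ⟨ih1, ih2⟩ := ih
    obtain ⟨a, hmax, hupd⟩ := hstep t
    have hsum_slack : ∑ j, (p j - q t j) = β ^ t := by
      rw [Finset.sum_sub_distrib, hp1, ih2]; ring
    have hcard : (Finset.univ : Finset (Fin m)).card = m := by simp
    have hkey : β ^ t ≤ m * (p a - q t a) := by
      calc β ^ t = ∑ j, (p j - q t j) := hsum_slack.symm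
        _ ≤ ∑ _j : Fin m, (p a - q t a) := Finset.sum_le_sum fun j _ => hmax j
        _ = m * (p a - q t a) := by rw [Finset.sum_const, hcard]; ring
    have hincr : (1 - β) * β ^ t ≤ p a - q t a := by
      have hmpos : (0:ℝ) < m := by exact_mod_cast hm
      have hβt : (0:ℝ) < β ^ t := pow_pos hβ0 t
      have h1 : (1 - β) * β ^ t * m ≤ 1 * β ^ t := by
        calc (1 - β) * β ^ t * m = ((1 - β) * m) * β ^ t := by ring
          _ ≤ 1 * β ^ t := by
            apply mul_le_mul_of_nonneg_right hβm hβt.le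
      have h2 : (1 - β) * β ^ t * m ≤ m * (p a - q t a) := le_trans (by linarith) hkey
      nlinarith
    constructor
    · intro j
      rw [hupd j]
      by_cases hj : j = a
      · subst hj; simp; linarith
      · simp [hj]; exact ih1 j
    · have : ∑ j, q (t + 1) j = ∑ j, (q t j + (1 - β) * β ^ t * (if j = a then 1 else 0)) :=
        Finset.sum_congr rfl fun j _ => hupd j
      rw [this, Finset.sum_add_distrib, ih2, ← Finset.mul_sum]
      rw [Finset.sum_ite_eq' Finset.univ a (fun _ => (1:ℝ))]
      simp
      ring
end

section
/- With P, β, L_σ, |S| as above, set λ := max{1, |S|·L_σ}, λ⁺ := 2λ/(1-β), and λ⁻ := βλ⁺ + λ. Then λ⁻ < λ⁺, and whenever ‖f‖_∞ ≤ 1 and ‖f‖_L ≤ λ⁺, one has ‖Pf‖_L ≤ λ⁻ and ‖Pf‖_∞ ≤ 1 (i.e., P is Lipschitz-friendly). -/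
theorem stmt10 {X : Type*} [MetricSpace X] [CompactSpace X]
    {S : Type*} [Fintype S]
    (σ : X → S → ℝ) (Γ : X → S → X) (Lσ β : ℝ)
    (hβ : β ∈ Set.Ioo (0:ℝ) 1)
    (hσ0 : ∀ x s, 0 ≤ σ x s) (hσ1 : ∀ x, ∑ s, σ x s = 1)
    (hσL : ∀ s x y, |σ x s - σ y s| ≤ Lσ * dist x y)
    (hΓ : ∀ s x y, dist (Γ x s) (Γ y s) ≤ β * dist x y)
    (lam lamP lamM : ℝ)
    (hlam : lam = max 1 ((Fintype.card S : ℝ) * Lσ))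
    (hlamP : lamP = 2 * lam / (1 - β))
    (hlamM : lamM = β * lamP + lam) :
    lamM < lamP ∧
    ∀ f : X → ℝ, (∀ x, |f x| ≤ 1) → (∀ x y, |f x - f y| ≤ lamP * dist x y) →
      (∀ x y, |(∑ s, σ x s * f (Γ x s)) - ∑ s, σ y s * f (Γ y s)| ≤ lamM * dist x y) ∧
      (∀ x, |∑ s, σ x s * f (Γ x s)| ≤ 1) := by
  obtain ⟨hβ0, hβ1⟩ := hβ
  have h1β : (0:ℝ) < 1 - β := by linarith
  have hlam1 : (1:ℝ) ≤ lam := hlam ▸ le_max_left _ _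
  have hcard : (Fintype.card S : ℝ) * Lσ ≤ lam := hlam ▸ le_max_right _ _
  have hPeq : lamP * (1 - β) = 2 * lam := by
    rw [hlamP]; field_simp
  constructor
  · rw [hlamM]; nlinarith
  intro f hf hfL
  constructor
  · intro x y
    have key : ∀ s, |σ x s * f (Γ x s) - σ y s * f (Γ y s)| ≤
        σ x s * (lamP * (β * dist x y)) + Lσ * dist x y := by
      intro s
      have h1 : σ x s * f (Γ x s) - σ y s * f (Γ y s)
          = σ x s * (f (Γ x s) - f (Γ y s)) + (σ x s - σ y s) * f (Γ y s) := by ring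
      rw [h1]
      calc |σ x s * (f (Γ x s) - f (Γ y s)) + (σ x s - σ y s) * f (Γ y s)|
          ≤ |σ x s * (f (Γ x s) - f (Γ y s))| + |(σ x s - σ y s) * f (Γ y s)| :=
            abs_add_le _ _
        _ ≤ σ x s * (lamP * (β * dist x y)) + Lσ * dist x y := by
            rw [abs_mul, abs_mul, abs_of_nonneg (hσ0 x s)]
            have hb1 : |f (Γ x s) - f (Γ y s)| ≤ lamP * (β * dist x y) := by
              refine (hfL _ _).trans ?_
              have hlamP0 : 0 ≤ lamP := by nlinarith
              exact mul_le_mul_of_nonneg_left (hΓ s x y) hlamP0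
            have hb2 : |σ x s - σ y s| * |f (Γ y s)| ≤ Lσ * dist x y * 1 :=
              mul_le_mul (hσL s x y) (hf _) (abs_nonneg _)
                ((abs_nonneg _).trans (hσL s x y))
            have := mul_le_mul_of_nonneg_left hb1 (hσ0 x s)
            nlinarith
    calc |(∑ s, σ x s * f (Γ x s)) - ∑ s, σ y s * f (Γ y s)|
        = |∑ s, (σ x s * f (Γ x s) - σ y s * f (Γ y s))| := by
          rw [Finset.sum_sub_distrib]
      _ ≤ ∑ s, |σ x s * f (Γ x s) - σ y s * f (Γ y s)| :=
          Finset.abs_sum_le_sum_abs _ _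
      _ ≤ ∑ s : S, (σ x s * (lamP * (β * dist x y)) + Lσ * dist x y) :=
          Finset.sum_le_sum fun s _ => key s
      _ = lamP * (β * dist x y) + (Fintype.card S : ℝ) * Lσ * dist x y := by
          rw [Finset.sum_add_distrib, ← Finset.sum_mul, hσ1 x]
          simp [Finset.sum_const, Finset.card_univ]; ring
      _ ≤ lamM * dist x y := by
          rw [hlamM]
          have := mul_le_mul_of_nonneg_right hcard (dist_nonneg : (0:ℝ) ≤ dist x y)
          have hd : (0:ℝ) ≤ dist x y := dist_nonneg
          nlinarith
  · intro x
    calc |∑ s, σ x s * f (Γ x s)| ≤ ∑ s, |σ x s * f (Γ x s)| :=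
          Finset.abs_sum_le_sum_abs _ _
      _ ≤ ∑ s, σ x s := Finset.sum_le_sum fun s _ => by
          rw [abs_mul, abs_of_nonneg (hσ0 x s)]
          nlinarith [hf (Γ x s), hσ0 x s, abs_nonneg (f (Γ x s))]
      _ = 1 := hσ1 x
end

section
/- If a Markov kernel P on a compact metric space satisfies [P^n f] ≤ a‖f‖_L θ^n for all Lipschitz f (with θ ∈ (0,1), a fixed), then P has at most one invariant Borel probability measure: any two probability measures μ, ν with μP = μ and νP = ν coincide. -/
noncomputable def spread {X : Type*} (f : X → ℝ) : ℝ := (⨆ x, f x) - ⨅ x, f x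

namespace Stmt13Aux
open MeasureTheory Filter Topology Metric Set

variable {X : Type*} [MetricSpace X] [CompactSpace X] [MeasurableSpace X] [BorelSpace X]

noncomputable def TT (P : X → Measure X) (g : X → ℝ) (x : X) : ℝ := ∫ y, g y ∂(P x)

lemma intbdd {m : Measure X} [IsFiniteMeasure m] {g : X → ℝ} {M : ℝ}
    (hg : AEStronglyMeasurable g m) (hb : ∀ x, |g x| ≤ M) : Integrable g m :=
  (integrable_const M).mono' hg (Eventually.of_forall fun x => by
    simpa [Real.norm_eq_abs] using hb x)

lemma TT_bdd {P : X → Measure X} (hP : ∀ x, IsProbabilityMeasure (P x)) {g : X → ℝ} {M : ℝ}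
    (hb : ∀ x, |g x| ≤ M) (x : X) : |TT P g x| ≤ M := by
  haveI := hP x
  have := norm_integral_le_of_norm_le_const (μ := P x) (f := g) (C := M)
    (Eventually.of_forall fun y => by simpa [Real.norm_eq_abs] using hb y)
  simpa [TT, Real.norm_eq_abs, measure_univ] using this

lemma aesm_T_cont {P : X → Measure X} {μ : Measure X}
    (hP : ∀ x, IsProbabilityMeasure (P x)) [IsProbabilityMeasure μ]
    (hinv : ∀ f : X → ℝ, Continuous f → ∫ x, TT P f x ∂μ = ∫ x, f x ∂μ)
    {f : X → ℝ} (hf : Continuous f) : AEStronglyMeasurable (TT P f) μ := by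
  obtain ⟨M, hM⟩ := isCompact_univ.exists_bound_of_continuousOn hf.continuousOn
  have hfb : ∀ x, |f x| ≤ M := fun x => by
    simpa [Real.norm_eq_abs] using hM x (mem_univ x)
  have hfi : ∀ x : X, Integrable f (P x) := fun x => by
    haveI := hP x; exact intbdd hf.aestronglyMeasurable hfb
  by_contra h
  have key : TT P (fun z => f z + 1) = fun x => TT P f x + 1 := by
    funext x; haveI := hP x
    simp only [TT]
    rw [integral_add (hfi x) (integrable_const 1), integral_const]
    simp [measure_univ]
  have h1 : ¬ Integrable (TT P f) μ := fun hi => h hi.1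
  have h2 : ¬ Integrable (TT P fun z => f z + 1) μ := by
    rw [key]; intro hi
    apply h1
    have h3 := hi.sub (integrable_const 1)
    have : ((fun x => TT P f x + 1) - fun _ => (1:ℝ)) = TT P f := by
      funext x; simp
    rwa [this] at h3
  have e1 := hinv f hf
  have e2 := hinv (fun z => f z + 1) (by fun_prop)
  rw [integral_undef h1] at e1
  rw [integral_undef h2] at e2
  have hfint : Integrable f μ := intbdd hf.aestronglyMeasurable hfb
  rw [integral_add hfint (integrable_const 1), integral_const] at e2
  simp [measure_univ] at e2
  linarith


lemma lim_case {P : X → Measure X} {μ : Measure X}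
    (hP : ∀ x, IsProbabilityMeasure (P x)) [IsProbabilityMeasure μ]
    {g : ℕ → X → ℝ} {G : X → ℝ} {M : ℝ}
    (hgb : ∀ n x, |g n x| ≤ M)
    (hgP : ∀ n x, AEStronglyMeasurable (g n) (P x))
    (hgA : ∀ n, AEStronglyMeasurable (TT P (g n)) μ)
    (hgI : ∀ n, ∫ x, TT P (g n) x ∂μ = ∫ x, g n x ∂μ)
    (hgm : ∀ n, AEStronglyMeasurable (g n) μ)
    (hlim : ∀ x, Tendsto (fun n => g n x) atTop (𝓝 (G x))) :
    AEStronglyMeasurable (TT P G) μ ∧ ∫ x, TT P G x ∂μ = ∫ x, G x ∂μ := by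
  have hTlim : ∀ x, Tendsto (fun n => TT P (g n) x) atTop (𝓝 (TT P G x)) := fun x => by
    haveI := hP x
    exact tendsto_integral_of_dominated_convergence (fun _ => M)
      (fun n => hgP n x) (integrable_const M)
      (fun n => Eventually.of_forall fun y => by simpa [Real.norm_eq_abs] using hgb n y)
      (Eventually.of_forall fun y => hlim y)
  have hA : AEStronglyMeasurable (TT P G) μ :=
    aestronglyMeasurable_of_tendsto_ae atTop hgA (Eventually.of_forall hTlim)
  refine ⟨hA, ?_⟩
  have t1 : Tendsto (fun n => ∫ x, TT P (g n) x ∂μ) atTop (𝓝 (∫ x, TT P G x ∂μ)) :=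
    tendsto_integral_of_dominated_convergence (fun _ => M) hgA (integrable_const M)
      (fun n => Eventually.of_forall fun x => by
        simpa [Real.norm_eq_abs] using TT_bdd hP (hgb n) x)
      (Eventually.of_forall hTlim)
  have t2 : Tendsto (fun n => ∫ x, g n x ∂μ) atTop (𝓝 (∫ x, G x ∂μ)) :=
    tendsto_integral_of_dominated_convergence (fun _ => M) hgm (integrable_const M)
      (fun n => Eventually.of_forall fun x => by simpa [Real.norm_eq_abs] using hgb n x)
      (Eventually.of_forall hlim)
  exact tendsto_nhds_unique (t1.congr hgI) t2


lemma tendsto_ev_const {g : ℕ → ℝ} {c : ℝ} (h : ∀ᶠ n in atTop, g n = c) :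
    Tendsto g atTop (𝓝 c) :=
  Tendsto.congr' (by filter_upwards [h] with n hn; exact hn.symm) tendsto_const_nhds

-- indicator basics
lemma ind_bdd (B : Set X) : ∀ x, |B.indicator (fun _ => (1:ℝ)) x| ≤ 1 := by
  intro x; by_cases hx : x ∈ B <;> simp [hx]

lemma ind_meas {B : Set X} (hB : MeasurableSet B) :
    Measurable (B.indicator (fun _ => (1:ℝ))) := measurable_const.indicator hB

lemma inv_indicator {P : X → Measure X} {μ : Measure X}
    (hP : ∀ x, IsProbabilityMeasure (P x)) [IsProbabilityMeasure μ]
    (hinv : ∀ f : X → ℝ, Continuous f → ∫ x, TT P f x ∂μ = ∫ x, f x ∂μ) :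
    ∀ ⦃B : Set X⦄, MeasurableSet B →
      AEStronglyMeasurable (TT P (B.indicator fun _ => (1:ℝ))) μ ∧
      ∫ x, TT P (B.indicator fun _ => (1:ℝ)) x ∂μ
        = ∫ x, B.indicator (fun _ => (1:ℝ)) x ∂μ := by
  have hempty : AEStronglyMeasurable (TT P ((∅ : Set X).indicator fun _ => (1:ℝ))) μ ∧
      ∫ x, TT P ((∅ : Set X).indicator fun _ => (1:ℝ)) x ∂μ
        = ∫ x, (∅ : Set X).indicator (fun _ => (1:ℝ)) x ∂μ := by
    have h0 : ((∅ : Set X).indicator fun _ => (1:ℝ)) = fun _ => (0:ℝ) := by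
      funext x; simp
    rw [h0]
    have : TT P (fun _ => (0:ℝ)) = fun _ => (0:ℝ) := by
      funext x; simp [TT]
    rw [this]
    exact ⟨aestronglyMeasurable_const, rfl⟩
  refine MeasurableSpace.induction_on_inter
    (C := fun B _ => AEStronglyMeasurable (TT P (B.indicator fun _ => (1:ℝ))) μ ∧
      ∫ x, TT P (B.indicator fun _ => (1:ℝ)) x ∂μ
        = ∫ x, B.indicator (fun _ => (1:ℝ)) x ∂μ)
    (show ‹MeasurableSpace X› = MeasurableSpace.generateFrom {s : Set X | IsClosed s} by
      rw [BorelSpace.measurable_eq (α := X), borel_eq_generateFrom_isClosed])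
    (fun s hs t ht _ => IsClosed.inter hs ht) ?_ ?_ ?_ ?_
  · exact hempty
  · -- closed sets
    rintro F (hF : IsClosed F)
    by_cases hFe : F = ∅
    · rw [hFe]; exact hempty
    have hFne : F.Nonempty := nonempty_iff_ne_empty.mpr hFe
    set g : ℕ → X → ℝ := fun k x => max 0 (1 - k * infDist x F) with hg
    have hgc : ∀ k, Continuous (g k) := fun k => by
      apply continuous_const.max
      exact continuous_const.sub (continuous_const.mul (continuous_infDist_pt F))
    have hgb : ∀ k x, |g k x| ≤ 1 := by
      intro k x
      rw [abs_le]
      constructor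
      · exact le_trans (by norm_num) (le_max_left _ _)
      · apply max_le (by norm_num)
        have : (0:ℝ) ≤ k * infDist x F :=
          mul_nonneg (Nat.cast_nonneg k) infDist_nonneg
        linarith
    have hlim : ∀ x, Tendsto (fun k => g k x) atTop
        (𝓝 (F.indicator (fun _ => (1:ℝ)) x)) := by
      intro x
      by_cases hx : x ∈ F
      · have : ∀ k, g k x = 1 := fun k => by
          simp [hg, infDist_zero_of_mem hx]
        rw [Set.indicator_of_mem hx]
        exact tendsto_ev_const (Eventually.of_forall this)
      · have hd : 0 < infDist x F := by
          rcases lt_or_eq_of_le (infDist_nonneg (s := F) (x := x)) with h | h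
          · exact h
          · exact absurd ((hF.mem_iff_infDist_zero hFne).mpr h.symm) hx
        rw [Set.indicator_of_notMem hx]
        apply tendsto_ev_const
        obtain ⟨K, hK⟩ := exists_nat_ge (1 / infDist x F)
        filter_upwards [eventually_ge_atTop K] with k hk
        have h1 : (1:ℝ) ≤ k * infDist x F := by
          have h2 : (1 / infDist x F) ≤ (k:ℝ) := le_trans hK (by exact_mod_cast hk)
          calc (1:ℝ) = (1 / infDist x F) * infDist x F := by field_simp
          _ ≤ k * infDist x F := mul_le_mul_of_nonneg_right h2 infDist_nonneg
        have hle : 1 - (k:ℝ) * infDist x F ≤ 0 := by linarith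
        simp only [hg]
        exact max_eq_left hle
    exact lim_case hP hgb (fun n x => (hgc n).aestronglyMeasurable)
      (fun n => aesm_T_cont hP hinv (hgc n)) (fun n => hinv _ (hgc n))
      (fun n => (hgc n).aestronglyMeasurable) hlim
  · -- complement
    intro t ht iht
    have hint : ∀ x : X, Integrable (t.indicator fun _ => (1:ℝ)) (P x) := fun x => by
      haveI := hP x
      exact intbdd (ind_meas ht).aestronglyMeasurable (ind_bdd t)
    have key : TT P (tᶜ.indicator fun _ => (1:ℝ))
        = fun x => 1 - TT P (t.indicator fun _ => (1:ℝ)) x := by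
      funext x; haveI := hP x
      have h1 : (tᶜ.indicator fun _ => (1:ℝ))
          = fun y => 1 - t.indicator (fun _ => (1:ℝ)) y := by
        funext y; by_cases hy : y ∈ t <;> simp [hy]
      simp only [TT, h1]
      rw [integral_sub (integrable_const 1) (hint x), integral_const]
      simp [measure_univ]
    have hTint : Integrable (TT P (t.indicator fun _ => (1:ℝ))) μ :=
      intbdd iht.1 (TT_bdd hP (ind_bdd t))
    constructor
    · rw [key]; exact aestronglyMeasurable_const.sub iht.1
    · rw [key]
      rw [integral_sub (integrable_const 1) hTint, integral_const]
      have h2 : (tᶜ.indicator fun _ => (1:ℝ))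
          = fun y => 1 - t.indicator (fun _ => (1:ℝ)) y := by
        funext y; by_cases hy : y ∈ t <;> simp [hy]
      rw [h2, integral_sub (integrable_const 1)
        (intbdd (ind_meas ht).aestronglyMeasurable (ind_bdd t)), integral_const, iht.2]
  · -- disjoint unions
    intro f hdisj hmeas ihf
    -- binary disjoint union
    have hbin : ∀ s t : Set X, MeasurableSet s → MeasurableSet t → Disjoint s t →
        (AEStronglyMeasurable (TT P (s.indicator fun _ => (1:ℝ))) μ ∧
          ∫ x, TT P (s.indicator fun _ => (1:ℝ)) x ∂μ = ∫ x, s.indicator (fun _ => (1:ℝ)) x ∂μ) →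
        (AEStronglyMeasurable (TT P (t.indicator fun _ => (1:ℝ))) μ ∧
          ∫ x, TT P (t.indicator fun _ => (1:ℝ)) x ∂μ = ∫ x, t.indicator (fun _ => (1:ℝ)) x ∂μ) →
        (AEStronglyMeasurable (TT P ((s ∪ t).indicator fun _ => (1:ℝ))) μ ∧
          ∫ x, TT P ((s ∪ t).indicator fun _ => (1:ℝ)) x ∂μ
            = ∫ x, (s ∪ t).indicator (fun _ => (1:ℝ)) x ∂μ) := by
      intro s t hs ht hst ihs iht
      have hind : (s ∪ t).indicator (fun _ => (1:ℝ))
          = fun y => s.indicator (fun _ => (1:ℝ)) y + t.indicator (fun _ => (1:ℝ)) y := by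
        rw [Set.indicator_union_of_disjoint hst]
      have key : TT P ((s ∪ t).indicator fun _ => (1:ℝ))
          = fun x => TT P (s.indicator fun _ => (1:ℝ)) x + TT P (t.indicator fun _ => (1:ℝ)) x := by
        funext x; haveI := hP x
        simp only [TT, hind]
        rw [integral_add (intbdd (ind_meas hs).aestronglyMeasurable (ind_bdd s))
          (intbdd (ind_meas ht).aestronglyMeasurable (ind_bdd t))]
      constructor
      · rw [key]; exact ihs.1.add iht.1
      · rw [key, integral_add (intbdd ihs.1 (TT_bdd hP (ind_bdd s)))
          (intbdd iht.1 (TT_bdd hP (ind_bdd t))), ihs.2, iht.2, hind,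
          integral_add (intbdd (ind_meas hs).aestronglyMeasurable (ind_bdd s))
          (intbdd (ind_meas ht).aestronglyMeasurable (ind_bdd t))]
    -- partial unions
    set A : ℕ → Set X := fun n => ⋃ i ∈ Finset.range n, f i with hA
    have hAmeas : ∀ n, MeasurableSet (A n) := fun n =>
      (Finset.range n).measurableSet_biUnion (fun i _ => hmeas i)
    have hAC : ∀ n, AEStronglyMeasurable (TT P ((A n).indicator fun _ => (1:ℝ))) μ ∧
        ∫ x, TT P ((A n).indicator fun _ => (1:ℝ)) x ∂μ
          = ∫ x, (A n).indicator (fun _ => (1:ℝ)) x ∂μ := by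
      intro n; induction n with
      | zero =>
        have : A 0 = ∅ := by simp [hA]
        rw [this]; exact hempty
      | succ n ih =>
        have hAn : A (n+1) = A n ∪ f n := by
          simp only [hA, Finset.range_add_one]
          rw [Finset.set_biUnion_insert]
          exact Set.union_comm _ _
        have hdisj2 : Disjoint (A n) (f n) := by
          rw [Set.disjoint_left]
          rintro x hx hxn
          simp only [hA, Set.mem_iUnion, Finset.mem_range] at hx
          obtain ⟨i, hi, hxi⟩ := hx
          exact Set.disjoint_left.mp (hdisj (Nat.ne_of_lt hi)) hxi hxn
        rw [hAn]
        exact hbin _ _ (hAmeas n) (hmeas n) hdisj2 ih (ihf n)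
    -- limit
    have hlim : ∀ x, Tendsto (fun n => (A n).indicator (fun _ => (1:ℝ)) x) atTop
        (𝓝 ((⋃ i, f i).indicator (fun _ => (1:ℝ)) x)) := by
      intro x
      by_cases hx : x ∈ ⋃ i, f i
      · obtain ⟨i0, hi0⟩ := Set.mem_iUnion.mp hx
        rw [Set.indicator_of_mem hx]
        apply tendsto_ev_const
        filter_upwards [eventually_ge_atTop (i0+1)] with n hn
        have : x ∈ A n := by
          simp only [hA, Set.mem_iUnion, Finset.mem_range]
          exact ⟨i0, by omega, hi0⟩
        rw [Set.indicator_of_mem this]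
      · rw [Set.indicator_of_notMem hx]
        have : ∀ n, (A n).indicator (fun _ => (1:ℝ)) x = 0 := fun n => by
          apply Set.indicator_of_notMem
          intro hxA
          apply hx
          simp only [hA, Set.mem_iUnion, Finset.mem_range] at hxA
          obtain ⟨i, _, hxi⟩ := hxA
          exact Set.mem_iUnion.mpr ⟨i, hxi⟩
        exact tendsto_ev_const (Eventually.of_forall this)
    exact lim_case hP (fun n => ind_bdd (A n))
      (fun n x => ((ind_meas (hAmeas n)).aestronglyMeasurable))
      (fun n => (hAC n).1) (fun n => (hAC n).2)
      (fun n => (ind_meas (hAmeas n)).aestronglyMeasurable) hlim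


lemma sf_bdd (s : SimpleFunc X ℝ) : ∃ M : ℝ, ∀ x, |s x| ≤ M := by
  obtain ⟨C, hC⟩ := s.exists_forall_norm_le
  exact ⟨C, fun x => by simpa [Real.norm_eq_abs] using hC x⟩

lemma inv_simple {P : X → Measure X} {μ : Measure X}
    (hP : ∀ x, IsProbabilityMeasure (P x)) [IsProbabilityMeasure μ]
    (hinv : ∀ f : X → ℝ, Continuous f → ∫ x, TT P f x ∂μ = ∫ x, f x ∂μ)
    (s : SimpleFunc X ℝ) :
    AEStronglyMeasurable (TT P ⇑s) μ ∧ ∫ x, TT P ⇑s x ∂μ = ∫ x, s x ∂μ := by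
  induction s using SimpleFunc.induction with
  | const c hs =>
    rename_i B
    have hcoe : ⇑(SimpleFunc.piecewise B hs (SimpleFunc.const X c) (SimpleFunc.const X 0))
        = fun y => c * B.indicator (fun _ => (1:ℝ)) y := by
      funext y
      by_cases hy : y ∈ B <;>
        simp [SimpleFunc.piecewise_apply, hy]
    rw [hcoe]
    have key : TT P (fun y => c * B.indicator (fun _ => (1:ℝ)) y)
        = fun x => c * TT P (B.indicator fun _ => (1:ℝ)) x := by
      funext x
      simp only [TT]
      have := integral_smul (μ := P x) c (fun y => B.indicator (fun _ => (1:ℝ)) y)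
      simpa [smul_eq_mul] using this
    obtain ⟨hA, hI⟩ := inv_indicator hP hinv hs
    constructor
    · rw [key]; exact hA.const_mul c
    · rw [key]
      have h1 := integral_smul (μ := μ) c (fun x => TT P (B.indicator fun _ => (1:ℝ)) x)
      have h2 := integral_smul (μ := μ) c (fun y => B.indicator (fun _ => (1:ℝ)) y)
      simp only [smul_eq_mul] at h1 h2
      rw [h1, h2, hI]
  | add hdisj ihu ihv =>
    rename_i u v
    obtain ⟨Mu, hMu⟩ := sf_bdd u
    obtain ⟨Mv, hMv⟩ := sf_bdd v
    have hui : ∀ x : X, Integrable (⇑u) (P x) := fun x => by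
      haveI := hP x; exact intbdd u.measurable.aestronglyMeasurable hMu
    have hvi : ∀ x : X, Integrable (⇑v) (P x) := fun x => by
      haveI := hP x; exact intbdd v.measurable.aestronglyMeasurable hMv
    have key : TT P ⇑(u + v) = fun x => TT P ⇑u x + TT P ⇑v x := by
      funext x
      simp only [TT, SimpleFunc.coe_add, Pi.add_apply]
      exact integral_add (hui x) (hvi x)
    constructor
    · rw [key]; exact ihu.1.add ihv.1
    · rw [key, integral_add (intbdd ihu.1 (TT_bdd hP hMu)) (intbdd ihv.1 (TT_bdd hP hMv)),
        ihu.2, ihv.2]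
      have : ∫ x, (u + v) x ∂μ = ∫ x, (u x + v x) ∂μ := by
        simp [SimpleFunc.coe_add]
      rw [this, integral_add (intbdd u.measurable.aestronglyMeasurable hMu)
        (intbdd v.measurable.aestronglyMeasurable hMv)]

lemma inv_bdd {P : X → Measure X} {μ : Measure X}
    (hP : ∀ x, IsProbabilityMeasure (P x)) [IsProbabilityMeasure μ]
    (hinv : ∀ f : X → ℝ, Continuous f → ∫ x, TT P f x ∂μ = ∫ x, f x ∂μ)
    {g : X → ℝ} {M : ℝ} (hgm : Measurable g) (hgb : ∀ x, |g x| ≤ M) :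
    AEStronglyMeasurable (TT P g) μ ∧ ∫ x, TT P g x ∂μ = ∫ x, g x ∂μ := by
  set s : ℕ → SimpleFunc X ℝ :=
    fun n => SimpleFunc.approxOn g hgm univ 0 (mem_univ 0) n with hs
  have hlim : ∀ x, Tendsto (fun n => s n x) atTop (𝓝 (g x)) := fun x =>
    SimpleFunc.tendsto_approxOn hgm (mem_univ 0) (by simp)
  have hb : ∀ n x, |s n x| ≤ 2 * M := by
    intro n x
    have h1 : dist (s n x) (g x) ≤ dist 0 (g x) := by
      have := SimpleFunc.edist_approxOn_le hgm (mem_univ 0) x n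
      rw [edist_dist, edist_dist] at this
      exact (ENNReal.ofReal_le_ofReal_iff dist_nonneg).mp this
    have h2 : dist 0 (g x) = |g x| := by
      rw [dist_comm, Real.dist_eq]; simp
    have h1' : |s n x - g x| ≤ |g x| := by
      have h3 := h1
      rw [Real.dist_eq, h2] at h3
      exact h3
    calc |s n x| = |s n x - g x + g x| := by ring_nf
    _ ≤ |s n x - g x| + |g x| := abs_add_le _ _
    _ ≤ |g x| + |g x| := add_le_add h1' le_rfl
    _ ≤ 2 * M := by have := hgb x; linarith
  exact lim_case hP hb
    (fun n x => (s n).measurable.aestronglyMeasurable)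
    (fun n => (inv_simple hP hinv (s n)).1)
    (fun n => (inv_simple hP hinv (s n)).2)
    (fun n => (s n).measurable.aestronglyMeasurable) hlim

lemma null_kernel {P : X → Measure X} {μ : Measure X}
    (hP : ∀ x, IsProbabilityMeasure (P x)) [IsProbabilityMeasure μ]
    (hinv : ∀ f : X → ℝ, Continuous f → ∫ x, TT P f x ∂μ = ∫ x, f x ∂μ)
    {N : Set X} (hN : MeasurableSet N) (hN0 : μ N = 0) :
    ∀ᵐ x ∂μ, P x N = 0 := by
  obtain ⟨hA, hI⟩ := inv_indicator hP hinv hN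
  have h1 : ∫ x, N.indicator (fun _ => (1:ℝ)) x ∂μ = 0 := by
    have hae : (N.indicator (fun _ => (1:ℝ))) =ᵐ[μ] 0 := by
      have h2 : ∀ᵐ x ∂μ, x ∉ N := (measure_eq_zero_iff_ae_notMem).mp hN0
      filter_upwards [h2] with x hx
      simp [Set.indicator_of_notMem hx]
    rw [integral_congr_ae hae]; simp
  have h2 : ∫ x, TT P (N.indicator fun _ => (1:ℝ)) x ∂μ = 0 := hI.trans h1
  have h3 : 0 ≤ TT P (N.indicator fun _ => (1:ℝ)) := by
    intro x
    haveI := hP x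
    exact integral_nonneg (fun y => Set.indicator_nonneg (fun _ _ => zero_le_one) y)
  have hint : Integrable (TT P (N.indicator fun _ => (1:ℝ))) μ :=
    intbdd hA (TT_bdd hP (ind_bdd N))
  have h4 : TT P (N.indicator fun _ => (1:ℝ)) =ᵐ[μ] 0 :=
    (integral_eq_zero_iff_of_nonneg h3 hint).mp h2
  have h5 : ∀ x : X, TT P (N.indicator fun _ => (1:ℝ)) x = (P x N).toReal := fun x => by
    haveI := hP x
    exact (integral_indicator_one (μ := P x) hN).trans (measureReal_def _ _)
  filter_upwards [h4] with x hx
  have h6 : (P x N).toReal = 0 := by rw [← h5 x]; exact hx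
  haveI := hP x
  rcases (ENNReal.toReal_eq_zero_iff _).mp h6 with h | h
  · exact h
  · exact absurd h (measure_ne_top _ _)


end Stmt13Aux

open Filter Topology Metric Set Stmt13Aux

open MeasureTheory in
theorem stmt13 {X : Type*} [MetricSpace X] [CompactSpace X]
    [MeasurableSpace X] [BorelSpace X]
    (P : X → Measure X) (hP : ∀ x, IsProbabilityMeasure (P x))
    (θ a : ℝ) (hθ : θ ∈ Set.Ioo (0:ℝ) 1)
    (hspread : ∀ (f : X → ℝ) (L : ℝ), (∀ x y, |f x - f y| ≤ L * dist x y) →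
      ∀ n : ℕ, spread ((fun (g : X → ℝ) => fun x => ∫ y, g y ∂(P x))^[n] f) ≤ a * L * θ ^ n)
    (μ ν : Measure X)
    (hμ : IsProbabilityMeasure μ) (hν : IsProbabilityMeasure ν)
    (hμinv : ∀ f : X → ℝ, Continuous f → ∫ x, (∫ y, f y ∂(P x)) ∂μ = ∫ x, f x ∂μ)
    (hνinv : ∀ f : X → ℝ, Continuous f → ∫ x, (∫ y, f y ∂(P x)) ∂ν = ∫ x, f x ∂ν) :
    μ = ν := by
  have hinvμ : ∀ f : X → ℝ, Continuous f → ∫ x, TT P f x ∂μ = ∫ x, f x ∂μ := hμinv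
  have hinvν : ∀ f : X → ℝ, Continuous f → ∫ x, TT P f x ∂ν = ∫ x, f x ∂ν := hνinv
  have hXne : Nonempty X := by
    by_contra h
    rw [not_nonempty_iff] at h
    have h1 : μ Set.univ = 1 := measure_univ
    rw [Set.univ_eq_empty_iff.mpr h] at h1
    simp at h1
  have key : ∀ (f : X → ℝ) (L : ℝ), (∀ x y, |f x - f y| ≤ L * dist x y) →
      ∫ x, f x ∂μ = ∫ x, f x ∂ν := by
    intro f L hL
    have hfc : Continuous f := by
      have hlip : LipschitzWith (Real.toNNReal (max L 0)) f := by
        apply LipschitzWith.of_dist_le_mul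
        intro x y
        rw [Real.dist_eq, Real.coe_toNNReal _ (le_max_right L 0)]
        exact le_trans (hL x y) (mul_le_mul_of_nonneg_right (le_max_left L 0) dist_nonneg)
      exact hlip.continuous
    obtain ⟨M0, hM0⟩ := isCompact_univ.exists_bound_of_continuousOn hfc.continuousOn
    have hfb : ∀ x, |f x| ≤ max M0 0 := fun x =>
      le_trans (by simpa [Real.norm_eq_abs] using hM0 x (Set.mem_univ x)) (le_max_left _ _)
    set M := max M0 0 with hM
    have hMnn : 0 ≤ M := le_max_right _ _
    have main : ∀ n : ℕ, ∃ G : X → ℝ, Measurable G ∧ (∀ x, |G x| ≤ M) ∧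
        (∀ᵐ x ∂μ, (TT P)^[n] f x = G x) ∧ (∀ᵐ x ∂ν, (TT P)^[n] f x = G x) ∧
        ∫ x, G x ∂μ = ∫ x, f x ∂μ ∧ ∫ x, G x ∂ν = ∫ x, f x ∂ν := by
      intro n
      induction n with
      | zero =>
        exact ⟨f, hfc.measurable, hfb, Eventually.of_forall (fun _ => rfl),
          Eventually.of_forall (fun _ => rfl), rfl, rfl⟩
      | succ n ih =>
        obtain ⟨G, hGm, hGb, haeμ, haeν, hIμ, hIν⟩ := ih
        obtain ⟨hAμ, hIμ'⟩ := inv_bdd hP hinvμ hGm hGb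
        obtain ⟨hAν, hIν'⟩ := inv_bdd hP hinvν hGm hGb
        have haeρ : ∀ᵐ x ∂(μ + ν), (TT P)^[n] f x = G x :=
          ae_add_measure_iff.mpr ⟨haeμ, haeν⟩
        obtain ⟨N, hNsub, hNmeas, hN0⟩ :=
          exists_measurable_superset_of_null (ae_iff.mp haeρ)
        rw [Measure.add_apply] at hN0
        have hNμ : μ N = 0 := (add_eq_zero.mp hN0).1
        have hNν : ν N = 0 := (add_eq_zero.mp hN0).2
        have hkμ := null_kernel hP hinvμ hNmeas hNμ
        have hkν := null_kernel hP hinvν hNmeas hNν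
        have hstepμ : ∀ᵐ x ∂μ, (TT P)^[n+1] f x = TT P G x := by
          filter_upwards [hkμ] with x hx
          rw [Function.iterate_succ_apply']
          apply integral_congr_ae
          rw [Filter.EventuallyEq, ae_iff]
          exact measure_mono_null (fun y hy => hNsub hy) hx
        have hstepν : ∀ᵐ x ∂ν, (TT P)^[n+1] f x = TT P G x := by
          filter_upwards [hkν] with x hx
          rw [Function.iterate_succ_apply']
          apply integral_congr_ae
          rw [Filter.EventuallyEq, ae_iff]
          exact measure_mono_null (fun y hy => hNsub hy) hx
        have hAρ : AEStronglyMeasurable (TT P G) (μ + ν) :=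
          aestronglyMeasurable_add_measure_iff.mpr ⟨hAμ, hAν⟩
        have hG1ae : TT P G =ᵐ[μ + ν] hAρ.mk _ := hAρ.ae_eq_mk
        set G2 : X → ℝ := fun x => max (-M) (min (hAρ.mk _ x) M) with hG2
        have hG2m : Measurable G2 :=
          measurable_const.max ((hAρ.stronglyMeasurable_mk.measurable).min measurable_const)
        have hTb : ∀ x, |TT P G x| ≤ M := TT_bdd hP hGb
        have hG2b : ∀ x, |G2 x| ≤ M := by
          intro x
          rw [hG2, abs_le]
          refine ⟨le_max_left _ _, max_le (by linarith) (min_le_right _ _)⟩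
        have hG2ae : TT P G =ᵐ[μ + ν] G2 := by
          filter_upwards [hG1ae] with x hx
          rw [hG2]
          simp only
          rw [← hx, min_eq_left (abs_le.mp (hTb x)).2, max_eq_right (abs_le.mp (hTb x)).1]
        obtain ⟨hG2μ, hG2ν⟩ := ae_add_measure_iff.mp hG2ae
        refine ⟨G2, hG2m, hG2b, ?_, ?_, ?_, ?_⟩
        · filter_upwards [hstepμ, hG2μ] with x h1 h2; rw [h1, h2]
        · filter_upwards [hstepν, hG2ν] with x h1 h2; rw [h1, h2]
        · rw [← integral_congr_ae hG2μ, hIμ', hIμ]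
        · rw [← integral_congr_ae hG2ν, hIν', hIν]
    have hItb : ∀ n (x : X), |(TT P)^[n] f x| ≤ M := by
      intro n
      induction n with
      | zero => simpa using hfb
      | succ n ihn =>
        intro x
        rw [Function.iterate_succ_apply']
        exact TT_bdd hP ihn x
    have hdiffle : ∀ n : ℕ, |∫ x, f x ∂μ - ∫ x, f x ∂ν| ≤ a * L * θ ^ n := by
      intro n
      obtain ⟨G, hGm, hGb, haeμ, haeν, hIμ, hIν⟩ := main n
      have hBA : BddAbove (Set.range ((TT P)^[n] f)) :=
        ⟨M, by rintro _ ⟨x, rfl⟩; exact (abs_le.mp (hItb n x)).2⟩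
      have hBB : BddBelow (Set.range ((TT P)^[n] f)) :=
        ⟨-M, by rintro _ ⟨x, rfl⟩; exact (abs_le.mp (hItb n x)).1⟩
      have hintμ : Integrable G μ := intbdd hGm.aestronglyMeasurable hGb
      have hintν : Integrable G ν := intbdd hGm.aestronglyMeasurable hGb
      have h1 : ∫ x, G x ∂μ ≤ ⨆ x, (TT P)^[n] f x := by
        calc ∫ x, G x ∂μ ≤ ∫ _x, (⨆ y, (TT P)^[n] f y) ∂μ := by
              apply integral_mono_ae hintμ (integrable_const _)
              filter_upwards [haeμ] with x hx
              rw [← hx]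
              exact le_ciSup hBA x
        _ = ⨆ y, (TT P)^[n] f y := by simp [measure_univ]
      have h3 : ∫ x, G x ∂ν ≤ ⨆ x, (TT P)^[n] f x := by
        calc ∫ x, G x ∂ν ≤ ∫ _x, (⨆ y, (TT P)^[n] f y) ∂ν := by
              apply integral_mono_ae hintν (integrable_const _)
              filter_upwards [haeν] with x hx
              rw [← hx]
              exact le_ciSup hBA x
        _ = ⨆ y, (TT P)^[n] f y := by simp [measure_univ]
      have h2 : (⨅ x, (TT P)^[n] f x) ≤ ∫ x, G x ∂ν := by
        calc (⨅ x, (TT P)^[n] f x) = ∫ _x, (⨅ y, (TT P)^[n] f y) ∂ν := by simp [measure_univ]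
        _ ≤ ∫ x, G x ∂ν := by
              apply integral_mono_ae (integrable_const _) hintν
              filter_upwards [haeν] with x hx
              rw [← hx]
              exact ciInf_le hBB x
      have h4 : (⨅ x, (TT P)^[n] f x) ≤ ∫ x, G x ∂μ := by
        calc (⨅ x, (TT P)^[n] f x) = ∫ _x, (⨅ y, (TT P)^[n] f y) ∂μ := by simp [measure_univ]
        _ ≤ ∫ x, G x ∂μ := by
              apply integral_mono_ae (integrable_const _) hintμ
              filter_upwards [haeμ] with x hx
              rw [← hx]
              exact ciInf_le hBB x
      have hsp : spread ((TT P)^[n] f) ≤ a * L * θ ^ n := hspread f L hL n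
      have hsp' : (⨆ x, (TT P)^[n] f x) - ⨅ x, (TT P)^[n] f x ≤ a * L * θ ^ n := hsp
      rw [← hIμ, ← hIν, abs_sub_le_iff]
      constructor <;> linarith
    have htendsto : Tendsto (fun n : ℕ => a * L * θ ^ n) atTop (𝓝 0) := by
      have h0 := tendsto_pow_atTop_nhds_zero_of_lt_one (le_of_lt hθ.1) hθ.2
      have h1 := h0.const_mul (a * L)
      simpa using h1
    have hle0 : |∫ x, f x ∂μ - ∫ x, f x ∂ν| ≤ 0 :=
      ge_of_tendsto htendsto (Eventually.of_forall hdiffle)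
    have hge0 := abs_nonneg (∫ x, f x ∂μ - ∫ x, f x ∂ν)
    have heq0 := abs_eq_zero.mp (le_antisymm hle0 hge0)
    linarith
  -- extend equality of integrals to equality of measures (test on closed sets)
  refine ext_of_generate_finite {s : Set X | IsClosed s}
    (show ‹MeasurableSpace X› = MeasurableSpace.generateFrom {s : Set X | IsClosed s} by
      rw [BorelSpace.measurable_eq (α := X), borel_eq_generateFrom_isClosed])
    (fun s hs t ht _ => IsClosed.inter hs ht) ?_ (by simp)
  intro F hF
  simp only [Set.mem_setOf_eq] at hF
  by_cases hFe : F = ∅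
  · rw [hFe]; simp
  have hFne : F.Nonempty := Set.nonempty_iff_ne_empty.mpr hFe
  set g : ℕ → X → ℝ := fun k x => max 0 (1 - k * infDist x F) with hg
  have hgc : ∀ k, Continuous (g k) := fun k =>
    continuous_const.max (continuous_const.sub (continuous_const.mul (continuous_infDist_pt F)))
  have hgb : ∀ k x, |g k x| ≤ 1 := by
    intro k x
    rw [abs_le]
    constructor
    · exact le_trans (by norm_num) (le_max_left _ _)
    · apply max_le (by norm_num)
      have : (0:ℝ) ≤ k * infDist x F := mul_nonneg (Nat.cast_nonneg k) infDist_nonneg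
      linarith
  have hLip : ∀ (k : ℕ) (x y : X), |g k x - g k y| ≤ (k : ℝ) * dist x y := by
    intro k x y
    have hd : |infDist x F - infDist y F| ≤ dist x y := by
      rw [abs_sub_le_iff]
      constructor
      · have := infDist_le_infDist_add_dist (x := x) (y := y) (s := F); linarith
      · have := infDist_le_infDist_add_dist (x := y) (y := x) (s := F)
        rw [dist_comm] at this; linarith
    have h1 : |g k x - g k y| ≤ |(1 - k * infDist x F) - (1 - k * infDist y F)| := by
      have := abs_max_sub_max_le_abs (1 - k * infDist x F) (1 - k * infDist y F) 0
      simpa [hg, max_comm] using this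
    calc |g k x - g k y| ≤ |(1 - k * infDist x F) - (1 - k * infDist y F)| := h1
    _ = (k : ℝ) * |infDist x F - infDist y F| := by
        rw [show (1 : ℝ) - k * infDist x F - (1 - k * infDist y F)
            = (k:ℝ) * (infDist y F - infDist x F) by ring]
        rw [abs_mul, Nat.abs_cast, abs_sub_comm]
    _ ≤ (k : ℝ) * dist x y := mul_le_mul_of_nonneg_left hd (Nat.cast_nonneg k)
  have hkint : ∀ k, ∫ x, g k x ∂μ = ∫ x, g k x ∂ν := fun k => key (g k) k (hLip k)
  have hlim : ∀ x, Tendsto (fun k => g k x) atTop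
      (𝓝 (F.indicator (fun _ => (1:ℝ)) x)) := by
    intro x
    by_cases hx : x ∈ F
    · have hone : ∀ k, g k x = 1 := fun k => by
        simp [hg, infDist_zero_of_mem hx]
      rw [Set.indicator_of_mem hx]
      exact tendsto_ev_const (Eventually.of_forall hone)
    · have hd : 0 < infDist x F := by
        rcases lt_or_eq_of_le (infDist_nonneg (s := F) (x := x)) with h | h
        · exact h
        · exact absurd ((hF.mem_iff_infDist_zero hFne).mpr h.symm) hx
      rw [Set.indicator_of_notMem hx]
      apply tendsto_ev_const
      obtain ⟨K, hK⟩ := exists_nat_ge (1 / infDist x F)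
      filter_upwards [eventually_ge_atTop K] with k hk
      have h1 : (1:ℝ) ≤ k * infDist x F := by
        have h2 : (1 / infDist x F) ≤ (k:ℝ) := le_trans hK (by exact_mod_cast hk)
        calc (1:ℝ) = (1 / infDist x F) * infDist x F := by field_simp
        _ ≤ k * infDist x F := mul_le_mul_of_nonneg_right h2 infDist_nonneg
      have hle : 1 - (k:ℝ) * infDist x F ≤ 0 := by linarith
      simp only [hg]
      exact max_eq_left hle
  have t1 : Tendsto (fun k => ∫ x, g k x ∂μ) atTop
      (𝓝 (∫ x, F.indicator (fun _ => (1:ℝ)) x ∂μ)) :=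
    tendsto_integral_of_dominated_convergence (fun _ => 1)
      (fun k => (hgc k).aestronglyMeasurable) (integrable_const 1)
      (fun k => Eventually.of_forall fun x => by simpa [Real.norm_eq_abs] using hgb k x)
      (Eventually.of_forall hlim)
  have t2 : Tendsto (fun k => ∫ x, g k x ∂ν) atTop
      (𝓝 (∫ x, F.indicator (fun _ => (1:ℝ)) x ∂ν)) :=
    tendsto_integral_of_dominated_convergence (fun _ => 1)
      (fun k => (hgc k).aestronglyMeasurable) (integrable_const 1)
      (fun k => Eventually.of_forall fun x => by simpa [Real.norm_eq_abs] using hgb k x)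
      (Eventually.of_forall hlim)
  have heq : ∫ x, F.indicator (fun _ => (1:ℝ)) x ∂μ = ∫ x, F.indicator (fun _ => (1:ℝ)) x ∂ν :=
    tendsto_nhds_unique (t1.congr hkint) t2
  have hμF : ∫ x, F.indicator (fun _ => (1:ℝ)) x ∂μ = (μ F).toReal :=
    (integral_indicator_one hF.measurableSet).trans (measureReal_def _ _)
  have hνF : ∫ x, F.indicator (fun _ => (1:ℝ)) x ∂ν = (ν F).toReal :=
    (integral_indicator_one hF.measurableSet).trans (measureReal_def _ _)
  rw [hμF, hνF] at heq
  exact (ENNReal.toReal_eq_toReal_iff' (measure_ne_top μ F) (measure_ne_top ν F)).mp heq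
end
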